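/- Let d, e, d̃, ẽ be integers with d² − d·e + e² ≠ 0. If there exists a ℚ-algebra isomorphism from ℚ[x,y]/(x³, y·(y + d̃·x)·(y + ẽ·x)) to ℚ[x,y]/(x³, y·(y + d·x)·(y + e·x)) that maps the ℚ-span of the classes of x and y onto the ℚ-span of the classes of x and y, then there exist nonzero rational numbers a and β with a²·(d̃² − d̃·ẽ + ẽ²) = β²·(d² − d·e + e²). -/
import Mathlib

noncomputable section

open MvPolynomial

/-- The relations ideal for `ℚ[x,y]/(x³, y·(y+d·x)·(y+e·x))`. -/
def Qrel (d e : ℤ) : Ideal (MvPolynomial (Fin 2) ℚ) :=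
  Ideal.span {X 0 ^ 3, X 1 * (X 1 + (d : ℚ) • X 0) * (X 1 + (e : ℚ) • X 0)}

/-- `QR d e = ℚ[x,y]/(x³, y·(y+d·x)·(y+e·x))`. -/
abbrev QR (d e : ℤ) := MvPolynomial (Fin 2) ℚ ⧸ Qrel d e

/-- The class of `x` in `QR d e`. -/
def qx (d e : ℤ) : QR d e := Ideal.Quotient.mk (Qrel d e) (X 0)

/-- The class of `y` in `QR d e`. -/
def qy (d e : ℤ) : QR d e := Ideal.Quotient.mk (Qrel d e) (X 1)

/-- The `ℚ`-span of the classes of `x` and `y` (the degree-2 part). -/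
def qdeg2 (d e : ℤ) : Submodule ℚ (QR d e) := Submodule.span ℚ {qx d e, qy d e}

/-- monomial exponent of x^i y^j -/
def mm (i j : ℕ) : Fin 2 →₀ ℕ := Finsupp.single 0 i + Finsupp.single 1 j

lemma mm_apply0 (i j : ℕ) : mm i j 0 = i := by simp [mm, Finsupp.single_apply]
lemma mm_apply1 (i j : ℕ) : mm i j 1 = j := by simp [mm, Finsupp.single_apply]

lemma mm_le {a b c d : ℕ} : mm a b ≤ mm c d ↔ a ≤ c ∧ b ≤ d := by
  rw [Finsupp.le_def]
  constructor
  · intro h; exact ⟨by simpa [mm_apply0] using h 0, by simpa [mm_apply1] using h 1⟩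
  · rintro ⟨h1, h2⟩ i
    fin_cases i <;> simpa [mm_apply0, mm_apply1]

lemma mm_inj {a b c d : ℕ} : mm a b = mm c d ↔ a = c ∧ b = d := by
  constructor
  · intro h
    exact ⟨by rw [← mm_apply0 a b, h, mm_apply0], by rw [← mm_apply1 a b, h, mm_apply1]⟩
  · rintro ⟨rfl, rfl⟩; rfl

lemma mm_sub {a b c d : ℕ} : mm c d - mm a b = mm (c - a) (d - b) := by
  ext i
  fin_cases i <;> simp [Finsupp.tsub_apply, mm_apply0, mm_apply1]

lemma monomial_mm (i j : ℕ) (r : ℚ) :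
    (monomial (mm i j) r : MvPolynomial (Fin 2) ℚ) = C r * X 0 ^ i * X 1 ^ j := by
  have h : C r * X 0 ^ i * X 1 ^ j =
      (monomial (Finsupp.single 0 i) r : MvPolynomial (Fin 2) ℚ) *
        monomial (Finsupp.single 1 j) 1 := by
    rw [C_mul_X_pow_eq_monomial, X_pow_eq_monomial]
  rw [h, monomial_mul, mul_one, mm]

lemma coeff_mul_mm (p : MvPolynomial (Fin 2) ℚ) (a b c d : ℕ) (r : ℚ) :
    coeff (mm c d) (p * monomial (mm a b) r) =
      if a ≤ c ∧ b ≤ d then coeff (mm (c - a) (d - b)) p * r else 0 := by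
  rw [coeff_mul_monomial', mm_sub]
  by_cases h : a ≤ c ∧ b ≤ d
  · rw [if_pos (mm_le.mpr h), if_pos h]
  · rw [if_neg (fun hh => h (mm_le.mp hh)), if_neg h]

/-- Coefficient constraints satisfied by every element of the relations ideal. -/
lemma qrel_coeff (d e : ℤ) {p : MvPolynomial (Fin 2) ℚ} (hp : p ∈ Qrel d e) :
    coeff (mm 1 0) p = 0 ∧ coeff (mm 0 1) p = 0 ∧
    coeff (mm 2 1) p = (d:ℚ)*(e:ℚ) * coeff (mm 0 3) p ∧
    coeff (mm 1 2) p = ((d:ℚ)+(e:ℚ)) * coeff (mm 0 3) p := by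
  rw [Qrel, Ideal.mem_span_pair] at hp
  obtain ⟨u, v, huv⟩ := hp
  have hg1 : (X 0 ^ 3 : MvPolynomial (Fin 2) ℚ) = monomial (mm 3 0) 1 := by
    rw [monomial_mm]; simp
  have hg2 : (X 1 * (X 1 + (d:ℚ) • X 0) * (X 1 + (e:ℚ) • X 0) : MvPolynomial (Fin 2) ℚ)
      = monomial (mm 0 3) 1 + monomial (mm 1 2) ((d:ℚ)+(e:ℚ))
        + monomial (mm 2 1) ((d:ℚ)*(e:ℚ)) := by
    rw [monomial_mm, monomial_mm, monomial_mm, smul_eq_C_mul, smul_eq_C_mul]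
    simp only [map_add, map_mul, map_one]
    ring
  rw [hg1, hg2] at huv
  refine ⟨?_, ?_, ?_, ?_⟩ <;>
  · rw [← huv]
    simp only [mul_add, coeff_add, coeff_mul_mm]
    norm_num
    try ring

lemma mk_smul (d e : ℤ) (r : ℚ) (p : MvPolynomial (Fin 2) ℚ) :
    r • Ideal.Quotient.mk (Qrel d e) p = Ideal.Quotient.mk (Qrel d e) (C r * p) := by
  rw [← smul_eq_C_mul]; rfl

lemma mk_lin (d e : ℤ) (a b : ℚ) :
    Ideal.Quotient.mk (Qrel d e) (C a * X 0 + C b * X 1) = a • qx d e + b • qy d e := by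
  rw [map_add, qx, qy, mk_smul, mk_smul]

set_option maxHeartbeats 1000000 in
/-- If `d² − d·e + e² ≠ 0` and there is a `ℚ`-algebra isomorphism
`ℚ[x,y]/(x³, y(y+d̃x)(y+ẽx)) ≃ ℚ[x,y]/(x³, y(y+dx)(y+ex))` mapping the span of `x, y`
onto the span of `x, y`, then `a²·(d̃² − d̃·ẽ + ẽ²) = β²·(d² − d·e + e²)` for some
nonzero rationals `a, β`. -/
theorem stmt10 (d e dt et : ℤ) (h : d ^ 2 - d * e + e ^ 2 ≠ 0)
    (hiso : ∃ φ : QR dt et ≃ₐ[ℚ] QR d e,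
      Submodule.map φ.toLinearMap (qdeg2 dt et) = qdeg2 d e) :
    ∃ a β : ℚ, a ≠ 0 ∧ β ≠ 0 ∧
      a ^ 2 * ((dt : ℚ) ^ 2 - (dt : ℚ) * (et : ℚ) + (et : ℚ) ^ 2) =
        β ^ 2 * ((d : ℚ) ^ 2 - (d : ℚ) * (e : ℚ) + (e : ℚ) ^ 2) := by
  obtain ⟨φ, hmap⟩ := hiso
  have hQ : ((d:ℚ)^2 - (d:ℚ)*(e:ℚ) + (e:ℚ)^2) ≠ 0 := by
    intro h0; apply h; exact_mod_cast h0
  -- images of x and y land in the span of x, y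
  have hx_mem : φ (qx dt et) ∈ qdeg2 d e := by
    rw [← hmap]
    exact ⟨qx dt et, Submodule.subset_span (Set.mem_insert _ _), rfl⟩
  have hy_mem : φ (qy dt et) ∈ qdeg2 d e := by
    rw [← hmap]
    exact ⟨qy dt et, Submodule.subset_span (Set.mem_insert_of_mem _ rfl), rfl⟩
  rw [qdeg2, Submodule.mem_span_pair] at hx_mem hy_mem
  obtain ⟨a, b, hab⟩ := hx_mem
  obtain ⟨c, f, hcf⟩ := hy_mem
  -- first relation : φ(x̃)³ = 0
  have hrel1 : (C a * X 0 + C b * X 1 : MvPolynomial (Fin 2) ℚ)^3 ∈ Qrel d e := by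
    rw [← Ideal.Quotient.eq_zero_iff_mem, map_pow, mk_lin, hab, ← map_pow]
    have hx3 : qx dt et ^ 3 = 0 := by
      rw [qx, ← map_pow, Ideal.Quotient.eq_zero_iff_mem]
      exact Ideal.subset_span (Set.mem_insert _ _)
    rw [hx3, map_zero]
  have hcube : (C a * X 0 + C b * X 1 : MvPolynomial (Fin 2) ℚ)^3
      = monomial (mm 3 0) (a^3) + monomial (mm 2 1) (3*a^2*b)
        + monomial (mm 1 2) (3*a*b^2) + monomial (mm 0 3) (b^3) := by
    simp only [monomial_mm, map_mul, map_pow, map_ofNat]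
    ring
  obtain ⟨-, -, hA, hB⟩ := qrel_coeff d e hrel1
  rw [hcube] at hA hB
  simp only [coeff_add, coeff_monomial, mm_inj] at hA hB
  norm_num at hA hB
  -- hA : 3*a^2*b = d*e*b^3,  hB : 3*a*b^2 = (d+e)*b^3
  have hb : b = 0 := by
    by_contra hb
    have h3a : 3*a = ((d:ℚ)+(e:ℚ))*b :=
      mul_right_cancel₀ (pow_ne_zero 2 hb) (by linear_combination hB)
    have h3a2 : 3*a^2 = (d:ℚ)*(e:ℚ)*b^2 :=
      mul_right_cancel₀ hb (by linear_combination hA)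
    have hz : ((d:ℚ)^2 - (d:ℚ)*(e:ℚ) + (e:ℚ)^2) * b^2 = 0 := by
      linear_combination (-(3*a) - ((d:ℚ)+(e:ℚ))*b) * h3a + 3 * h3a2
    rcases mul_eq_zero.mp hz with h' | h'
    · exact hQ h'
    · exact pow_ne_zero 2 hb h'
  -- x is nonzero in QR dt et
  have hxne : qx dt et ≠ 0 := by
    intro h0
    have hh := (qrel_coeff dt et (Ideal.Quotient.eq_zero_iff_mem.mp h0)).1
    rw [show (X 0 : MvPolynomial (Fin 2) ℚ) = monomial (mm 1 0) 1 by
      rw [monomial_mm]; simp] at hh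
    rw [coeff_monomial, if_pos rfl] at hh
    exact one_ne_zero hh
  have ha : a ≠ 0 := by
    intro h0
    apply hxne
    apply φ.injective
    rw [map_zero, ← hab, hb, h0]
    simp
  -- f ≠ 0
  have hf : f ≠ 0 := by
    intro h0
    have himg : qdeg2 d e ≤ Submodule.span ℚ {qx d e} := by
      rw [← hmap, qdeg2, Submodule.map_span, Set.image_insert_eq, Set.image_singleton]
      apply Submodule.span_le.mpr
      rintro z (rfl | rfl)
      · show φ.toLinearMap (qx dt et) ∈ _
        rw [AlgEquiv.toLinearMap_apply, ← hab, hb]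
        simpa using Submodule.smul_mem _ a (Submodule.mem_span_singleton_self (qx d e))
      · show φ.toLinearMap (qy dt et) ∈ _
        rw [AlgEquiv.toLinearMap_apply, ← hcf, h0]
        simpa using Submodule.smul_mem _ c (Submodule.mem_span_singleton_self (qx d e))
    have hy1 : qy d e ∈ Submodule.span ℚ {qx d e} :=
      himg (by rw [qdeg2]; exact Submodule.subset_span (Set.mem_insert_of_mem _ rfl))
    obtain ⟨t, ht⟩ := Submodule.mem_span_singleton.mp hy1
    have hz : (C t * X 0 + C (-1) * X 1 : MvPolynomial (Fin 2) ℚ) ∈ Qrel d e := by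
      rw [← Ideal.Quotient.eq_zero_iff_mem, mk_lin]
      rw [ht]  -- ?
      module
    have hh := (qrel_coeff d e hz).2.1
    rw [show (C t * X 0 + C (-1) * X 1 : MvPolynomial (Fin 2) ℚ)
        = monomial (mm 1 0) t + monomial (mm 0 1) (-1) by
      rw [monomial_mm, monomial_mm]; ring] at hh
    simp only [coeff_add, coeff_monomial, mm_inj] at hh
    norm_num at hh
  -- second relation
  have hfac2 : Ideal.Quotient.mk (Qrel d e) (C (c + dt*a) * X 0 + C f * X 1)
      = φ (qy dt et) + (dt:ℚ) • φ (qx dt et) := by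
    rw [mk_lin, ← hab, ← hcf, hb]
    module
  have hfac3 : Ideal.Quotient.mk (Qrel d e) (C (c + et*a) * X 0 + C f * X 1)
      = φ (qy dt et) + (et:ℚ) • φ (qx dt et) := by
    rw [mk_lin, ← hab, ← hcf, hb]
    module
  have hrel2 : ((C c * X 0 + C f * X 1) * (C (c + dt*a) * X 0 + C f * X 1)
      * (C (c + et*a) * X 0 + C f * X 1) : MvPolynomial (Fin 2) ℚ) ∈ Qrel d e := by
    have inner : (qy dt et * (qy dt et + (dt:ℚ) • qx dt et)
        * (qy dt et + (et:ℚ) • qx dt et)) = 0 := by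
      rw [qx, qy, mk_smul, mk_smul, ← map_add, ← map_add, ← map_mul, ← map_mul,
        Ideal.Quotient.eq_zero_iff_mem]
      have : (X 1 * (X 1 + C (dt:ℚ) * X 0) * (X 1 + C (et:ℚ) * X 0) : MvPolynomial (Fin 2) ℚ)
          = X 1 * (X 1 + (dt:ℚ) • X 0) * (X 1 + (et:ℚ) • X 0) := by
        rw [smul_eq_C_mul, smul_eq_C_mul]
      rw [this]
      exact Ideal.subset_span (Set.mem_insert_of_mem _ rfl)
    have key := congrArg φ inner
    rw [map_zero] at key
    rw [← Ideal.Quotient.eq_zero_iff_mem, map_mul, map_mul, mk_lin, hcf, hfac2, hfac3, ← key]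
    simp only [map_mul, map_add, map_smul]
  have hprod : ((C c * X 0 + C f * X 1) * (C (c + dt*a) * X 0 + C f * X 1)
      * (C (c + et*a) * X 0 + C f * X 1) : MvPolynomial (Fin 2) ℚ)
      = monomial (mm 3 0) (c*(c+dt*a)*(c+et*a))
        + monomial (mm 2 1) ((c*(c+dt*a) + c*(c+et*a) + (c+dt*a)*(c+et*a))*f)
        + monomial (mm 1 2) ((c + (c+dt*a) + (c+et*a))*f^2)
        + monomial (mm 0 3) (f^3) := by
    simp only [monomial_mm, map_mul, map_add, map_pow, map_ofNat]
    ring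
  obtain ⟨-, -, hA2, hB2⟩ := qrel_coeff d e hrel2
  rw [hprod] at hA2 hB2
  simp only [coeff_add, coeff_monomial, mm_inj] at hA2 hB2
  norm_num at hA2 hB2
  have e1 : 3*c + ((dt:ℚ)+(et:ℚ))*a = ((d:ℚ)+(e:ℚ))*f :=
    mul_right_cancel₀ (pow_ne_zero 2 hf) (by linear_combination hB2)
  have e2 : 3*c^2 + 2*((dt:ℚ)+(et:ℚ))*a*c + (dt:ℚ)*(et:ℚ)*a^2 = (d:ℚ)*(e:ℚ)*f^2 :=
    mul_right_cancel₀ hf (by linear_combination hA2)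
  exact ⟨a, f, ha, hf, by
    linear_combination (3*c + ((dt:ℚ)+(et:ℚ))*a + ((d:ℚ)+(e:ℚ))*f) * e1 - 3 * e2⟩
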